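/- (Simes inequality) If all K hypotheses are null and the p-values are PRDS, then for all α ∈ [0,1], P(S_K(P) ≤ α) ≤ α, where S_K(p₁,…,p_K) = min_{k=1,…,K} (K/k)·p_(k). -/

import Mathlib

/-! Let `R` be the number of Benjamini–Hochberg rejections at level `α` and `q_r = α r / K`.
Then `S_K(P) ≤ α` iff `R ≥ 1`, and on `{R = r}` at least `r` of the p-values are `≤ q_r`; with
`P(P_k ≤ q_r) ≤ q_r` this gives `P(R = r) ≤ (α / K) ∑_k P(R = r | P_k ≤ q_r)`. For a fixed `k`
the event `{R ≤ r}` is increasing in the p-values, so PRDS gives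
`P(R ≥ r + 1 | P_k ≤ q_{r+1}) ≤ P(R ≥ r + 1 | P_k ≤ q_r)`, and `∑_r P(R = r | P_k ≤ q_r)`
telescopes to at most `1`. Summing over `k` bounds `P(S_K(P) ≤ α)` by `α`. -/

open MeasureTheory ProbabilityTheory Finset
open scoped ENNReal Classical

noncomputable section

/-- The `i`-th smallest value (0-indexed) among `p 0, …, p (K-1)`. -/
def sortAsc {K : ℕ} (p : Fin K → ℝ) : Fin K → ℝ := p ∘ Tuple.sort p

/-- The `i`-th largest value (0-indexed) among `e 0, …, e (K-1)`. -/
def sortDesc {K : ℕ} (e : Fin K → ℝ) : Fin K → ℝ := e ∘ Tuple.sort (fun j => -e j)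

/-- `k* = max {k : K p_(k) / k ≤ α}` (with `max ∅ = 0`), the BH rejection count. -/
def bhCount (K : ℕ) (α : ℝ) (p : Fin K → ℝ) : ℕ :=
  (univ.filter (fun i : Fin K => (K : ℝ) * sortAsc p i / (i.1 + 1) ≤ α)).sup
    (fun i => i.1 + 1)

/-- The BH procedure rejects the hypotheses carrying the `k*` smallest p-values. -/
def bhRejects (K : ℕ) (α : ℝ) (p : Fin K → ℝ) : Finset (Fin K) :=
  univ.filter (fun k => ∃ i : Fin K, i.1 + 1 ≤ bhCount K α p ∧ p k ≤ sortAsc p i)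

/-- `k* = max {k : k e_[k] / K ≥ 1/α}`, the e-BH rejection count. -/
def ebhCount (K : ℕ) (α : ℝ) (e : Fin K → ℝ) : ℕ :=
  (univ.filter (fun i : Fin K => 1 / α ≤ (i.1 + 1) * sortDesc e i / K)).sup
    (fun i => i.1 + 1)

/-- The e-BH procedure rejects the hypotheses carrying the `k*` largest e-values. -/
def ebhRejects (K : ℕ) (α : ℝ) (e : Fin K → ℝ) : Finset (Fin K) :=
  univ.filter (fun k => ∃ i : Fin K, i.1 + 1 ≤ ebhCount K α e ∧ sortDesc e i ≤ e k)

/-- Simes function `S_K(p) = min_k (K/k) p_(k)`. -/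
def simes (K : ℕ) (p : Fin K → ℝ) : ℝ := ⨅ i : Fin K, (K : ℝ) / (i.1 + 1) * sortAsc p i

/-- Harmonic number `ℓ_K = ∑_{k=1}^K 1/k`. -/
def harm (K : ℕ) : ℝ := ∑ k ∈ Finset.Icc 1 K, (1 : ℝ) / k

/-- An increasing (upper) subset of `ℝ^K`. -/
def IncreasingSet {K : ℕ} (A : Set (Fin K → ℝ)) : Prop := ∀ x ∈ A, ∀ y, x ≤ y → y ∈ A

/-- Positive regression dependence on the subset `N` of nulls. -/
def PRDS {Ω : Type*} [MeasurableSpace Ω] (μ : Measure Ω) {K : ℕ}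
    (P : Fin K → Ω → ℝ) (N : Finset (Fin K)) : Prop :=
  ∀ k ∈ N, ∀ A : Set (Fin K → ℝ), MeasurableSet A → IncreasingSet A →
    Monotone (fun x : ℝ => μ[|{ω | P k ω ≤ x}] {ω | (fun j => P j ω) ∈ A})

/-- False discovery proportion of a rejection set `D` w.r.t. the null set `N`. -/
def fdp {K : ℕ} (D N : Finset (Fin K)) : ℝ := ((D ∩ N).card : ℝ) / (max D.card 1 : ℕ)

end

theorem Monotone.le_iff_lt_card_filter_le {β : Type*} [LinearOrder β] {n : ℕ}
    {f : Fin n → β} (hf : Monotone f) (i : Fin n) (c : β) :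
    f i ≤ c ↔ i.1 < #{j | f j ≤ c} := by
  constructor
  · intro h
    have : Iic i ⊆ ({j | f j ≤ c} : Finset _) := fun j hj => by
      simpa using (hf (mem_Iic.1 hj)).trans h
    simpa using card_le_card this
  · intro h
    by_contra! hc
    have : ({j | f j ≤ c} : Finset _) ⊆ Iio i := fun j hj => by
      simp only [mem_filter, mem_univ, true_and] at hj
      exact mem_Iio.2 (lt_of_not_ge fun hij => (hc.trans_le (hf hij)).not_ge hj)
    simpa using (card_le_card this).trans_lt' h

theorem sortAsc_le_iff {K : ℕ} (p : Fin K → ℝ) (i : Fin K) (c : ℝ) :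
    sortAsc p i ≤ c ↔ i.1 < #{k | p k ≤ c} := by
  rw [sortAsc, (Tuple.monotone_sort p).le_iff_lt_card_filter_le]
  exact Iff.of_eq (congrArg _ (card_equiv (Tuple.sort p) (by simp)))

theorem monotone_sortAsc {K : ℕ} : Monotone (sortAsc (K := K)) := by
  intro p p' hp i
  rw [sortAsc_le_iff]
  refine ((sortAsc_le_iff p' i _).1 le_rfl).trans_le (card_le_card fun k hk => ?_)
  simp only [mem_filter, mem_univ, true_and] at hk ⊢
  exact (hp k).trans hk

theorem measurable_sortAsc {K : ℕ} (i : Fin K) :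
    Measurable fun p : Fin K → ℝ => sortAsc p i := by
  refine measurable_of_Iic fun c => ?_
  have hcount : Measurable fun p : Fin K → ℝ => #{k | p k ≤ c} := by
    simp_rw [card_filter]
    exact Finset.measurable_sum _ fun k _ =>
      Measurable.ite (measurableSet_le (measurable_pi_apply k) measurable_const)
        measurable_const measurable_const
  have : (fun p : Fin K → ℝ => sortAsc p i) ⁻¹' Set.Iic c =
      (fun p : Fin K → ℝ => #{k | p k ≤ c}) ⁻¹' Set.Ioi i.1 := by
    ext p
    exact sortAsc_le_iff p i c
  rw [this]
  exact hcount MeasurableSet.of_discrete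

section BHCount

variable {K : ℕ} {α : ℝ}

theorem bhCount_le (p : Fin K → ℝ) : bhCount K α p ≤ K :=
  Finset.sup_le fun i _ => i.2

theorem antitone_bhCount : Antitone (bhCount K α) := by
  intro p p' hp
  refine Finset.sup_mono fun i hi => ?_
  simp only [mem_filter, mem_univ, true_and] at hi ⊢
  refine le_trans ?_ hi
  have := monotone_sortAsc hp i
  gcongr

theorem measurable_bhCount : Measurable (bhCount K α) := by
  refine measurable_of_Ioi fun n => ?_
  have : bhCount K α ⁻¹' Set.Ioi n = ⋃ i : Fin K,
      {p | (K : ℝ) * sortAsc p i / (i.1 + 1) ≤ α} ∩ {_p | n < i.1 + 1} := by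
    ext p
    simp [bhCount, Finset.lt_sup_iff]
  rw [this]
  exact MeasurableSet.iUnion fun i => MeasurableSet.inter
    (measurableSet_le (((measurable_sortAsc i).const_mul _).div_const _) measurable_const)
    (MeasurableSet.const _)

end BHCount

theorem simes_le_iff_pos_bhCount {K : ℕ} (hK : 0 < K) (α : ℝ) (p : Fin K → ℝ) :
    simes K p ≤ α ↔ 0 < bhCount K α p := by
  have : Nonempty (Fin K) := ⟨⟨0, hK⟩⟩
  have hterm (i : Fin K) : (K : ℝ) / (i.1 + 1) * sortAsc p i = K * sortAsc p i / (i.1 + 1) :=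
    div_mul_eq_mul_div _ _ _
  simp only [bhCount, Finset.lt_sup_iff, mem_filter, mem_univ, true_and, Nat.add_one_pos,
    and_true]
  constructor
  · intro h
    obtain ⟨i, hi⟩ := exists_eq_ciInf_of_finite
      (f := fun i : Fin K => (K : ℝ) / (i.1 + 1) * sortAsc p i)
    exact ⟨i, hterm i ▸ hi ▸ h⟩
  · rintro ⟨i, hi⟩
    exact (ciInf_le (Finite.bddBelow_range _) i).trans (hterm i ▸ hi)

theorem le_card_filter_of_bhCount_eq {K : ℕ} {α : ℝ} {p : Fin K → ℝ} {r : ℕ}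
    (h : bhCount K α p = r) : r ≤ #{k | p k ≤ α * r / K} := by
  rcases r.eq_zero_or_pos with rfl | hr
  · exact Nat.zero_le _
  obtain ⟨i, hi, -⟩ := Finset.lt_sup_iff.1 (h ▸ hr : 0 < bhCount K α p)
  obtain ⟨j, hj, hjr⟩ := exists_mem_eq_sup _ ⟨i, hi⟩ fun i : Fin K => i.1 + 1
  rw [← bhCount, h] at hjr
  subst hjr
  simp only [mem_filter, mem_univ, true_and] at hj
  have hK : (0 : ℝ) < K := by exact_mod_cast j.pos
  rw [div_le_iff₀ (by positivity), ← le_div_iff₀' hK] at hj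
  push_cast
  exact (sortAsc_le_iff p j _).1 hj

section Measure

variable {Ω : Type*} [MeasurableSpace Ω]

theorem measure_le_ofReal_of_mem_Icc {μ : Measure Ω} [IsProbabilityMeasure μ] {X : Ω → ℝ}
    (hX : ∀ x ∈ Set.Ioo (0 : ℝ) 1, μ {ω | X ω ≤ x} ≤ ENNReal.ofReal x) :
    ∀ x ∈ Set.Icc (0 : ℝ) 1, μ {ω | X ω ≤ x} ≤ ENNReal.ofReal x := by
  have hmono : Monotone fun x => μ {ω | X ω ≤ x} :=
    fun x y hxy => measure_mono fun ω (hω : X ω ≤ x) => hω.trans hxy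
  rintro x ⟨hx0, hx1⟩
  rcases hx1.lt_or_eq with hx1 | rfl
  · rcases hx0.lt_or_eq with hx0 | rfl
    · exact hX x ⟨hx0, hx1⟩
    · refine ge_of_tendsto ((ENNReal.continuous_ofReal.tendsto 0).mono_left
        (nhdsWithin_le_nhds (s := Set.Ioi 0))) ?_
      filter_upwards [Ioo_mem_nhdsGT one_pos] with y hy using (hmono hy.1.le).trans (hX y hy)
  · simpa using prob_le_one

theorem natCast_mul_measure_le_sum_measure_inter {ι : Type*} (μ : Measure Ω) (s : Finset ι)
    {C : ι → Set Ω} (hC : ∀ k ∈ s, MeasurableSet (C k)) {D : Set Ω} {n : ℕ}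
    (hD : ∀ ω ∈ D, n ≤ #{k ∈ s | ω ∈ C k}) :
    n * μ D ≤ ∑ k ∈ s, μ (C k ∩ D) := by
  calc n * μ D = ∫⁻ _ in D, (n : ℝ≥0∞) ∂μ := (setLIntegral_const _ _).symm
    _ ≤ ∫⁻ ω in D, ∑ k ∈ s, (C k).indicator 1 ω ∂μ := by
      refine setLIntegral_mono
        (Finset.measurable_sum _ fun k hk => measurable_one.indicator (hC k hk)) fun ω hω => ?_
      have hsum : ∑ k ∈ s, (C k).indicator 1 ω = (#{k ∈ s | ω ∈ C k} : ℝ≥0∞) := by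
        rw [card_filter, Nat.cast_sum]
        refine sum_congr rfl fun k _ => ?_
        by_cases hk : ω ∈ C k <;> simp [hk]
      exact hsum ▸ Nat.cast_le.2 (hD ω hω)
    _ = ∑ k ∈ s, μ (C k ∩ D) := by
      rw [lintegral_finsetSum _ fun k hk => measurable_one.indicator (hC k hk)]
      refine sum_congr rfl fun k hk => ?_
      rw [lintegral_indicator_one (hC k hk), Measure.restrict_apply (hC k hk)]

theorem prob_le_prob_of_prob_compl_le {μ ν : Measure Ω} [IsProbabilityMeasure μ]
    [IsProbabilityMeasure ν] {s : Set Ω} (hs : MeasurableSet s) (h : μ sᶜ ≤ ν sᶜ) :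
    ν s ≤ μ s := by
  refine (ENNReal.add_le_add_iff_right (measure_ne_top ν sᶜ)).1 ?_
  calc ν s + ν sᶜ = μ s + μ sᶜ := by rw [prob_add_prob_compl hs, prob_add_prob_compl hs]
    _ ≤ μ s + ν sᶜ := by gcongr

-- `hν` and the guard `ν r ≠ 0` in `hstep` make room for conditioning on null events,
-- where `μ[|s] = 0`.
theorem sum_measure_diff_add_le_one {ν : ℕ → Measure Ω} [∀ r, IsZeroOrProbabilityMeasure (ν r)]
    {E : ℕ → Set Ω} (hE : Antitone E) (hEm : ∀ r, MeasurableSet (E r))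
    (hν : ∀ r s, r ≤ s → ν s = 0 → ν r = 0)
    (hstep : ∀ r, ν r ≠ 0 → ν (r + 1) (E (r + 1)) ≤ ν r (E (r + 1))) (n : ℕ) :
    ∑ r ∈ range n, ν r (E r \ E (r + 1)) + ν n (E n) ≤ 1 := by
  induction n with
  | zero => simpa using prob_le_one
  | succ n ih =>
    by_cases h0 : ν n = 0
    · have hzero : ∀ r ∈ range (n + 1), ν r (E r \ E (r + 1)) = 0 := fun r hr => by
        rw [hν r n (Nat.lt_succ_iff.1 (mem_range.1 hr)) h0, Measure.coe_zero, Pi.zero_apply]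
      rw [sum_eq_zero hzero, zero_add]
      exact prob_le_one
    · calc ∑ r ∈ range (n + 1), ν r (E r \ E (r + 1)) + ν (n + 1) (E (n + 1))
          ≤ ∑ r ∈ range n, ν r (E r \ E (r + 1)) +
            (ν n (E n \ E (n + 1)) + ν n (E n ∩ E (n + 1))) := by
            rw [sum_range_succ, add_assoc, Set.inter_eq_right.2 (hE n.le_succ)]
            exact add_le_add le_rfl (add_le_add le_rfl (hstep n h0))
        _ ≤ 1 := by rwa [measure_sdiff_add_inter _ (hEm _)]

end Measure

section BHProcedure

variable {Ω : Type*} [MeasurableSpace Ω] {μ : Measure Ω} [IsProbabilityMeasure μ]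
  {K : ℕ} {P : Fin K → Ω → ℝ} {α : ℝ}

theorem measure_bhCount_eq_le (hP : ∀ k, Measurable (P k)) {r : ℕ} (hr : 0 < r)
    (hq : ∀ k, μ {ω | P k ω ≤ α * r / K} ≤ ENNReal.ofReal (α * r / K)) :
    μ {ω | bhCount K α (fun j => P j ω) = r} ≤ ENNReal.ofReal (α / K) *
      ∑ k, μ[{ω | bhCount K α (fun j => P j ω) = r} | {ω | P k ω ≤ α * r / K}] := by
  set D := {ω | bhCount K α (fun j => P j ω) = r}
  have hC (k : Fin K) : MeasurableSet {ω | P k ω ≤ α * r / K} :=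
    measurableSet_le (hP k) measurable_const
  have hq' : ENNReal.ofReal (α * r / K) = r * ENNReal.ofReal (α / K) := by
    rw [mul_div_right_comm, mul_comm, ENNReal.ofReal_mul (Nat.cast_nonneg r),
      ENNReal.ofReal_natCast]
  refine (ENNReal.mul_le_mul_iff_right (Nat.cast_ne_zero.2 hr.ne') (ENNReal.natCast_ne_top r)).1 ?_
  calc r * μ D ≤ ∑ k, μ ({ω | P k ω ≤ α * r / K} ∩ D) :=
        natCast_mul_measure_le_sum_measure_inter μ univ (fun k _ => hC k)
          fun ω hω => by simpa using le_card_filter_of_bhCount_eq hω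
    _ = ∑ k, μ[D | {ω | P k ω ≤ α * r / K}] * μ {ω | P k ω ≤ α * r / K} := by
        simp only [cond_mul_eq_inter (hC _)]
    _ ≤ ∑ k, μ[D | {ω | P k ω ≤ α * r / K}] * (r * ENNReal.ofReal (α / K)) := by
        gcongr with k
        exact hq' ▸ hq k
    _ = r * (ENNReal.ofReal (α / K) * ∑ k, μ[D | {ω | P k ω ≤ α * r / K}]) := by
        rw [← sum_mul]
        ring

theorem sum_cond_bhCount_eq_le_one (hP : ∀ k, Measurable (P k)) (h_prds : PRDS μ P univ)
    (hα : 0 ≤ α) (k : Fin K) :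
    ∑ r ∈ range (K + 1),
      μ[{ω | bhCount K α (fun j => P j ω) = r} | {ω | P k ω ≤ α * r / K}] ≤ 1 := by
  set C : ℕ → Set Ω := fun r => {ω | P k ω ≤ α * r / K}
  set E : ℕ → Set Ω := fun r => {ω | r ≤ bhCount K α (fun j => P j ω)}
  have hCm (r : ℕ) : MeasurableSet (C r) := measurableSet_le (hP k) measurable_const
  have hC : Monotone C := fun r s hrs ω (hω : P k ω ≤ _) =>
    hω.trans (by gcongr : α * r / K ≤ α * s / K)
  have hEm (r : ℕ) : MeasurableSet (E r) :=
    (measurable_bhCount.comp (measurable_pi_lambda _ hP)) MeasurableSet.of_discrete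
  have hE : Antitone E := fun r s hrs ω (hω : s ≤ _) => hrs.trans hω
  have hcond_eq_zero (r : ℕ) : μ[|C r] = 0 ↔ μ (C r) = 0 := by
    simp [cond_eq_zero, measure_ne_top]
  have hν (r s : ℕ) (hrs : r ≤ s) (hs : μ[|C s] = 0) : μ[|C r] = 0 :=
    (hcond_eq_zero r).2 (measure_mono_null (hC hrs) ((hcond_eq_zero s).1 hs))
  have hstep (r : ℕ) (hr : μ[|C r] ≠ 0) : μ[E (r + 1) | C (r + 1)] ≤ μ[E (r + 1) | C r] := by
    have hr' : μ (C r) ≠ 0 := mt (hcond_eq_zero r).2 hr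
    have : IsProbabilityMeasure μ[|C r] := cond_isProbabilityMeasure hr'
    have : IsProbabilityMeasure μ[|C (r + 1)] :=
      cond_isProbabilityMeasure fun h => hr' (measure_mono_null (hC r.le_succ) h)
    refine prob_le_prob_of_prob_compl_le (hEm _) ?_
    have hAm : MeasurableSet {x : Fin K → ℝ | ¬ r + 1 ≤ bhCount K α x} :=
      measurable_bhCount (MeasurableSet.of_discrete (s := {n | ¬ r + 1 ≤ n}))
    have hA : IncreasingSet {x : Fin K → ℝ | ¬ r + 1 ≤ bhCount K α x} :=
      fun x hx y hxy hy => hx (hy.trans (antitone_bhCount hxy))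
    exact h_prds k (mem_univ k) _ hAm hA (by gcongr; exact_mod_cast r.le_succ)
  have hD (r : ℕ) : E r \ E (r + 1) = {ω | bhCount K α (fun j => P j ω) = r} := by
    ext ω
    simp only [E, Set.mem_sdiff, Set.mem_ofPred_eq]
    omega
  calc ∑ r ∈ range (K + 1), μ[{ω | bhCount K α (fun j => P j ω) = r} | C r]
      = ∑ r ∈ range (K + 1), μ[E r \ E (r + 1) | C r] := by simp only [hD]
    _ ≤ ∑ r ∈ range (K + 1), μ[E r \ E (r + 1) | C r] + μ[E (K + 1) | C (K + 1)] :=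
        le_self_add
    _ ≤ 1 := sum_measure_diff_add_le_one hE hEm hν hstep (K + 1)

end BHProcedure

/-- **Simes inequality.** If all `K` hypotheses are null and the p-values are PRDS, then
`P(S_K(P) ≤ α) ≤ α` for all `α ∈ [0,1]`. -/
theorem simes_inequality_prds
    {Ω : Type*} [MeasurableSpace Ω] (μ : Measure Ω) [IsProbabilityMeasure μ]
    {K : ℕ} (hK : 0 < K)
    (P : Fin K → Ω → ℝ) (hP : ∀ k, Measurable (P k))
    (h_pvar : ∀ k, ∀ x ∈ Set.Ioo (0 : ℝ) 1, μ {ω | P k ω ≤ x} ≤ ENNReal.ofReal x)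
    (h_prds : PRDS μ P Finset.univ) :
    ∀ α ∈ Set.Icc (0 : ℝ) 1,
      μ {ω | simes K (fun j => P j ω) ≤ α} ≤ ENNReal.ofReal α := by
  rintro α ⟨hα0, hα1⟩
  have hq (r : ℕ) (hr : r ∈ Icc 1 K) (k : Fin K) :
      μ {ω | P k ω ≤ α * r / K} ≤ ENNReal.ofReal (α * r / K) := by
    have hrK : (r : ℝ) ≤ K := by exact_mod_cast (mem_Icc.1 hr).2
    exact measure_le_ofReal_of_mem_Icc (h_pvar k) _
      ⟨by positivity, div_le_one_of_le₀ (by nlinarith) (Nat.cast_nonneg K)⟩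
  set R := fun ω => bhCount K α (fun j => P j ω)
  calc μ {ω | simes K (fun j => P j ω) ≤ α} ≤ μ (⋃ r ∈ Icc 1 K, {ω | R ω = r}) :=
        measure_mono fun ω hω => Set.mem_iUnion₂.2 ⟨R ω,
          mem_Icc.2 ⟨(simes_le_iff_pos_bhCount hK α _).1 hω, bhCount_le _⟩, rfl⟩
    _ ≤ ∑ r ∈ Icc 1 K, μ {ω | R ω = r} := measure_biUnion_finset_le _ _
    _ ≤ ∑ r ∈ Icc 1 K, ENNReal.ofReal (α / K) *
          ∑ k, μ[{ω | R ω = r} | {ω | P k ω ≤ α * r / K}] :=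
        sum_le_sum fun r hr => measure_bhCount_eq_le hP (mem_Icc.1 hr).1 (hq r hr)
    _ ≤ ∑ r ∈ range (K + 1), ENNReal.ofReal (α / K) *
          ∑ k, μ[{ω | R ω = r} | {ω | P k ω ≤ α * r / K}] :=
        sum_le_sum_of_subset fun r hr => mem_range.2 (Nat.lt_succ_of_le (mem_Icc.1 hr).2)
    _ = ENNReal.ofReal (α / K) * ∑ k, ∑ r ∈ range (K + 1),
          μ[{ω | R ω = r} | {ω | P k ω ≤ α * r / K}] := by
        rw [← mul_sum, sum_comm]
    _ ≤ ENNReal.ofReal (α / K) * ∑ _k : Fin K, 1 := by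
        gcongr with k
        exact sum_cond_bhCount_eq_le_one hP h_prds hα0 k
    _ = ENNReal.ofReal α := by
        rw [sum_const, card_univ, Fintype.card_fin, nsmul_one, ← ENNReal.ofReal_natCast,
          ← ENNReal.ofReal_mul (by positivity), div_mul_cancel₀ _ (by positivity)]
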